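/- arXiv:1907.09087 — 2 statements merged into one kernel-verified Lean document; each statement's English description precedes it below -/
import Mathlib

section
/- In the multivariate power series ring ℚ[[x_1,x_2,x_3,x_4,q]] one has (Σ_{d≥2, d_1,d_2,d_3,d_4≥1} (12·C_{d−2}/d)·(d_1−1)(d_2−1)(d_3−1)(d_4−1)·x_1^{d_1} x_2^{d_2} x_3^{d_3} x_4^{d_4} q^d) · Π_{i=1}^{4}(1−x_i)^2 = [(6q − 1) + (1 − 4q)(1 − 2q·F(q))]·x_1^2 x_2^2 x_3^2 x_4^2. (This is Lemma 4.3: the generating function Ñ(x_1,x_2,x_3,x_4,q) of the weighted counts Ñ^d_{d_1,d_2,d_3,d_4} equals [(6q−1)+(1−4q)^{3/2}]·Π_i (x_i/(1−x_i))^2, stated with denominators cleared and with 1 − 2q·F(q) as the power-series form of (1−4q)^{1/2}.) -/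
/-- The weighted count `Ñ^d_{d_1,d_2,d_3,d_4} = (12·C_{d−2}/d)·(d_1−1)(d_2−1)(d_3−1)(d_4−1)`. -/
noncomputable def tildeN (d d1 d2 d3 d4 : ℕ) : ℚ :=
  12 * (catalan (d - 2) : ℚ) / (d : ℚ) *
    ((d1 : ℚ) - 1) * ((d2 : ℚ) - 1) * ((d3 : ℚ) - 1) * ((d4 : ℚ) - 1)

/-- The variables: `Xv 0, Xv 1, Xv 2, Xv 3` are `x_1,x_2,x_3,x_4`, and `Xv 4` is `q`. -/
noncomputable def Xv (i : Fin 5) : MvPowerSeries (Fin 5) ℚ := MvPowerSeries.X i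

/-- The generating function `Ñ(x_1,x_2,x_3,x_4,q) =
Σ_{d≥2, d_i≥1} Ñ^d_{d_1,d_2,d_3,d_4} x_1^{d_1} x_2^{d_2} x_3^{d_3} x_4^{d_4} q^d`. -/
noncomputable def tildeNseries : MvPowerSeries (Fin 5) ℚ :=
  fun e => if 1 ≤ e 0 ∧ 1 ≤ e 1 ∧ 1 ≤ e 2 ∧ 1 ≤ e 3 ∧ 2 ≤ e 4
    then tildeN (e 4) (e 0) (e 1) (e 2) (e 3) else 0

/-- The Catalan generating function `F(q)`, viewed in `ℚ[[x_1,x_2,x_3,x_4,q]]`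
as a power series in the variable `q` alone. -/
noncomputable def catalanGFq : MvPowerSeries (Fin 5) ℚ :=
  fun e => if e 0 = 0 ∧ e 1 = 0 ∧ e 2 = 0 ∧ e 3 = 0 then (catalan (e 4) : ℚ) else 0

/-!
The coefficient `Ñ^d_{d₁,d₂,d₃,d₄}` is a product of a function of each `dᵢ` and a function
of `d`, so `Ñ = P(x₁) P(x₂) P(x₃) P(x₄) W(q)` with `P(x) = Σ (n-1)₊ xⁿ = x² / (1-x)²` and
`W(q) = Σ_{d≥2} (12 C_{d-2} / d) q^d`. It remains to see `W = (6q-1) + (1-4q)(1-2qF)`, which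
compared coefficientwise is the recurrence `(n+2) C_{n+1} = 2(2n+1) C_n`.
-/

open PowerSeries

namespace MvPowerSeries

section CommSemiring

variable {σ R : Type*} [Fintype σ] [CommSemiring R]

/-- The product `∏ i, (f i)(X i)` of one-variable series in distinct variables, defined by its
coefficients so that multiplicativity becomes a bijection of antidiagonals. -/
noncomputable def prodSubstX : (σ → R⟦X⟧) →* MvPowerSeries σ R where
  toFun f e := ∏ i, PowerSeries.coeff (e i) (f i)
  map_one' := by
    classical
    ext e
    change ∏ i, PowerSeries.coeff (e i) 1 = _
    simp [PowerSeries.coeff_one, coeff_one, Fintype.prod_boole, Finsupp.ext_iff]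
  map_mul' f g := by
    classical
    ext e
    change ∏ i, PowerSeries.coeff (e i) (f i * g i) = ∑ p ∈ Finset.HasAntidiagonal.antidiagonal e,
      (∏ i, PowerSeries.coeff (p.1 i) (f i)) * ∏ i, PowerSeries.coeff (p.2 i) (g i)
    simp only [PowerSeries.coeff_mul, Finset.prod_univ_sum, ← Finset.prod_mul_distrib]
    symm
    refine Finset.sum_nbij' (fun p i => (p.1 i, p.2 i))
      (fun t => (Finsupp.equivFunOnFinite.symm fun i => (t i).1,
        Finsupp.equivFunOnFinite.symm fun i => (t i).2)) ?_ ?_ ?_ ?_ ?_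
    · simp [Finsupp.ext_iff]
    · simp [Finsupp.ext_iff]
    · intro p _; ext <;> simp
    · intro t _; ext <;> simp
    · intro p _; rfl

end CommSemiring

variable {σ R : Type*} [Fintype σ] [CommRing R]

theorem prodSubstX_mulSingle [DecidableEq σ] (i : σ) (g : R⟦X⟧) :
    prodSubstX (Pi.mulSingle i g) = g.subst (X i) := by
  ext e
  rw [coeff_subst_single]
  change ∏ j, PowerSeries.coeff (e j) ((Pi.mulSingle i g : σ → R⟦X⟧) j) = _
  rw [Fintype.prod_eq_mul_prod_compl i]
  have hcompl : ∀ j ∈ ({i}ᶜ : Finset σ),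
      PowerSeries.coeff (e j) ((Pi.mulSingle i g : σ → R⟦X⟧) j) = if e j = 0 then 1 else 0 :=
    fun j hj => by rw [Pi.mulSingle_eq_of_ne (by simpa using hj), PowerSeries.coeff_one]
  rw [Finset.prod_congr rfl hcompl, Finset.prod_boole, Pi.mulSingle_eq_same]
  have hsupp : e = Finsupp.single i (e i) ↔ ∀ j ∈ ({i}ᶜ : Finset σ), e j = 0 := by
    simp only [Finset.mem_compl, Finset.mem_singleton, Finsupp.ext_iff, Finsupp.single_apply]
    grind
  simp only [hsupp, mul_ite, mul_one, mul_zero]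

theorem coeff_prod_subst_X (f : σ → R⟦X⟧) (e : σ →₀ ℕ) :
    coeff e (∏ i, (f i).subst (X i)) = ∏ i, PowerSeries.coeff (e i) (f i) := by
  classical
  simp_rw [← prodSubstX_mulSingle, ← map_prod, Finset.univ_prod_mulSingle]
  rfl

end MvPowerSeries

namespace PowerSeries

variable (R : Type*) [CommRing R]

noncomputable def predSeries : R⟦X⟧ := mk fun n => ((n - 1 : ℕ) : R)

theorem predSeries_mul_one_sub_X_sq : predSeries R * (1 - X) ^ 2 = X ^ 2 := by
  have h : predSeries R = X ^ 2 * mk fun n => ((1 + n).choose 1 : R) := by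
    ext n
    rw [predSeries, coeff_X_pow_mul', coeff_mk, coeff_mk]
    split_ifs with hn
    · rw [Nat.choose_one_right, show 1 + (n - 2) = n - 1 by omega]
    · rw [Nat.sub_eq_zero_of_le (by omega), Nat.cast_zero]
  rw [h, mul_assoc, mk_add_choose_mul_one_sub_pow_eq_one, mul_one]

end PowerSeries

theorem add_two_mul_catalan_succ (n : ℕ) :
    (n + 2) * catalan (n + 1) = 2 * (2 * n + 1) * catalan n := by
  apply Nat.eq_of_mul_eq_mul_left n.succ_pos
  calc (n + 1) * ((n + 2) * catalan (n + 1)) = (n + 1) * (n + 1).centralBinom := by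
        rw [← succ_mul_catalan_eq_centralBinom]
    _ = 2 * (2 * n + 1) * n.centralBinom := Nat.succ_mul_centralBinom_succ n
    _ = (n + 1) * (2 * (2 * n + 1) * catalan n) := by
        rw [← succ_mul_catalan_eq_centralBinom]; ring

noncomputable def catalanWeightSeries : ℚ⟦X⟧ :=
  mk fun d => if 2 ≤ d then 12 * catalan (d - 2) / d else 0

theorem catalanWeightSeries_eq :
    catalanWeightSeries =
      (6 * X - 1) + (1 - 4 * X) * (1 - 2 * X * catalanSeries.map (Nat.castRingHom ℚ)) := by
  set F := catalanSeries.map (Nat.castRingHom ℚ)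
  have hF (n : ℕ) : coeff n F = catalan n := by simp [F, coeff_map]
  have h : (6 * X - 1) + (1 - 4 * X) * (1 - 2 * X * F) = X * (C 2 - C 2 * F + C 8 * (X * F)) := by
    simp only [map_ofNat]; ring
  rw [h]
  ext (_ | _ | n) <;>
    simp only [catalanWeightSeries, coeff_mk, coeff_zero_X_mul, coeff_succ_X_mul, map_add, map_sub,
      coeff_C_mul, coeff_C, hF]
  · simp
  · simp
  · have hrec := congrArg (Nat.cast : ℕ → ℚ) (add_two_mul_catalan_succ n)
    push_cast at hrec
    rw [if_pos (by omega), if_neg (by omega), show n + 1 + 1 - 2 = n by omega]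
    push_cast
    field_simp
    linear_combination 2 * hrec

theorem tildeNseries_eq_prod_subst :
    tildeNseries = ∏ i, (![predSeries ℚ, predSeries ℚ, predSeries ℚ, predSeries ℚ,
      catalanWeightSeries] i).subst (MvPowerSeries.X i) := by
  ext e
  rw [MvPowerSeries.coeff_prod_subst_X, Fin.prod_univ_five]
  simp only [Matrix.cons_val, predSeries, catalanWeightSeries, coeff_mk]
  change (if _ then _ else _) = _
  by_cases h : 1 ≤ e 0 ∧ 1 ≤ e 1 ∧ 1 ≤ e 2 ∧ 1 ≤ e 3 ∧ 2 ≤ e 4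
  · obtain ⟨h0, h1, h2, h3, h4⟩ := h
    simp only [h0, h1, h2, h3, h4, and_self, if_true, tildeN, Nat.cast_sub]
    push_cast
    ring
  · rw [if_neg h]
    have : e 0 = 0 ∨ e 1 = 0 ∨ e 2 = 0 ∨ e 3 = 0 ∨ e 4 < 2 := by omega
    rcases this with h | h | h | h | h <;> simp [h]

theorem catalanGFq_eq_subst :
    catalanGFq = (catalanSeries.map (Nat.castRingHom ℚ)).subst (MvPowerSeries.X (4 : Fin 5)) := by
  ext e
  rw [coeff_subst_single, coeff_map, catalanSeries_coeff]
  change (if _ then _ else _) = _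
  congr 1
  simp [Finsupp.ext_iff, Fin.forall_fin_succ, Finsupp.single_apply]

/-- Lemma 4.3 with denominators cleared:
`Ñ(x,q) · Π_i (1−x_i)^2 = [(6q−1) + (1−4q)(1−2q·F(q))] · Π_i x_i^2`. -/
theorem tildeN_gf_formula :
    tildeNseries * ((1 - Xv 0) ^ 2 * (1 - Xv 1) ^ 2 * (1 - Xv 2) ^ 2 * (1 - Xv 3) ^ 2) =
      ((6 * Xv 4 - 1) + (1 - 4 * Xv 4) * (1 - 2 * Xv 4 * catalanGFq)) *
        ((Xv 0) ^ 2 * (Xv 1) ^ 2 * (Xv 2) ^ 2 * (Xv 3) ^ 2) := by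
  have hP (i : Fin 5) : (predSeries ℚ).subst (MvPowerSeries.X i) * (1 - Xv i) ^ 2 = Xv i ^ 2 := by
    simpa only [Xv, map_mul, map_pow, map_sub, map_one, substAlgHom_X, coe_substAlgHom] using
      congrArg (substAlgHom (HasSubst.X (S := ℚ) i)) (predSeries_mul_one_sub_X_sq ℚ)
  have hW : (6 * Xv 4 - 1) + (1 - 4 * Xv 4) * (1 - 2 * Xv 4 * catalanGFq) =
      catalanWeightSeries.subst (MvPowerSeries.X 4) := by
    simpa only [Xv, map_add, map_mul, map_sub, map_one, map_ofNat, substAlgHom_X, coe_substAlgHom,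
      ← catalanGFq_eq_subst] using
      (congrArg (substAlgHom (HasSubst.X (S := ℚ) (4 : Fin 5))) catalanWeightSeries_eq).symm
  rw [tildeNseries_eq_prod_subst, Fin.prod_univ_five, hW, ← hP 0, ← hP 1, ← hP 2, ← hP 3]
  simp only [Matrix.cons_val]
  ring
end

section
/- Let d ≥ 2 and let n_1 ≥ n_2 ≥ n_3 ≥ n_4 ≥ 0 be integers with n_1+n_2+n_3+n_4 = 2d−4. Then the coefficient of q^d in the power series (1 − 4q)·(1 − 2q·F(q))·U_{n_1}·U_{n_2}·U_{n_3}·U_{n_4} ∈ ℚ[[q]] equals: 6 if n_1 = n_2 = n_3 = n_4; 4 if n_1 = n_2 ≠ n_3 = n_4; 2 if n_1 + n_4 = n_2 + n_3 and n_1 ≠ n_2; −2 if n_1 = n_2 + n_3 + n_4 + 2; and 0 otherwise. (This is the generating-function form, via the dictionary of Lemma 4.11, of Lemma 4.13: ∫_{Gr(2,d+1)} σ_{n_1}σ_{n_2}σ_{n_3}σ_{n_4}(8σ_{11} − 2σ_1²) equals the displayed case values; here (1−4q)(1−2q·F(q)) is the power-series form of (1−4q)^{3/2} and U_{n_i} =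 s_{n_i}(α,β).) -/
/-- The generating function `F(q) = Σ_{n≥0} C_n q^n ∈ ℚ[[q]]` of the Catalan numbers. -/
noncomputable def catalanGF : PowerSeries ℚ := PowerSeries.mk fun n => (catalan n : ℚ)

/-- `U n ∈ ℚ[q]`: `U 0 = U 1 = 1`, `U (n+2) = U (n+1) − q·U n`;
equivalently `U n = (α^{n+1} − β^{n+1})/(α − β)` where `α, β` are the roots of `t² − t + q`. -/
noncomputable def U : ℕ → Polynomial ℚ
  | 0 => 1
  | 1 => 1
  | (n + 2) => U (n + 1) - Polynomial.X * U n

/-!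
In `ℚ⟦q⟧` the roots of `t² - t + q` are `α = qF` and `β = 1 - qF`, so `S = 1 - 2qF = β - α`
is the square root of `1 - 4q`, the prefactor is `S³`, and `S·U_n = β^{n+1} - α^{n+1}`.
As `α^n + β^n` is a polynomial of degree `≤ n/2` while `q^n ∣ α^n`, this gives
`[q^{m+2}] S³·U_{2m} = 6, -2, 0` for `m = 0, m = 1, m ≥ 2`. The Clebsch–Gordan rule
`U_{m+n}·U_n = Σ_j q^{n-j}·U_{m+2j}` turns this into the value `magicPairing a b` of
`[q^{t+2}] S³·U_a·U_b` for `a + b = 2t`, and, applied to the pairs `(n₁, n₂)` and `(n₃, n₄)`,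
writes the coefficient of the theorem as a sum of `magicPairing` over a product of two
arithmetic progressions of step `2`. That sum telescopes to five boundary terms.
-/

open PowerSeries Finset

theorem catalanGF_eq_one_add_X_mul_sq : catalanGF = 1 + X * catalanGF ^ 2 := by
  ext (_ | n)
  · simp [catalanGF]
  · rw [map_add, coeff_succ_X_mul]
    simp only [catalanGF, coeff_mk, pow_two, coeff_mul, catalan_succ', coeff_one]
    push_cast
    simp

theorem X_mul_catalanGF_mul_one_sub : X * catalanGF * (1 - X * catalanGF) = X := by
  linear_combination X * catalanGF_eq_one_add_X_mul_sq

theorem U_add_two (n : ℕ) : U (n + 2) = U (n + 1) - Polynomial.X * U n := rfl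

theorem U_add_add_two (m n : ℕ) :
    U (m + n + 2) = U (m + 1) * U (n + 1) - Polynomial.X * U m * U n := by
  induction n using Nat.twoStepInduction with
  | zero => simp [U]
  | one => simp only [U]; ring
  | more n ih₀ ih₁ =>
    rw [← add_assoc] at ih₁ ⊢
    rw [U_add_two (m + n + 2), show m + n + 2 + 1 = m + n + 1 + 2 by ring, ih₁, ih₀,
      show n + 2 + 1 = n + 1 + 2 by ring, U_add_two (n + 1), U_add_two n]
    ring

theorem U_add_mul_U (m n : ℕ) :
    U (m + n) * U n = ∑ j ∈ range (n + 1), Polynomial.X ^ (n - j) * U (m + 2 * j) := by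
  induction n with
  | zero => simp [U]
  | succ n ih =>
    have hshift : ∑ j ∈ range (n + 1), Polynomial.X ^ (n + 1 - j) * U (m + 2 * j) =
        Polynomial.X * (U (m + n) * U n) := by
      rw [ih, mul_sum]
      refine sum_congr rfl fun j hj => ?_
      rw [Nat.sub_add_comm (mem_range_succ_iff.mp hj), pow_succ]
      ring
    rw [sum_range_succ, hshift, Nat.sub_self, pow_zero, one_mul, ← add_assoc,
      show m + 2 * (n + 1) = m + n + n + 2 by ring, U_add_add_two]
    ring

theorem coe_U_add_two (n : ℕ) :
    (U (n + 2) : ℚ⟦X⟧) = (U (n + 1) : ℚ⟦X⟧) - X * (U n : ℚ⟦X⟧) := by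
  rw [U_add_two, Polynomial.coe_sub, Polynomial.coe_mul, Polynomial.coe_X]

theorem coe_U_add_mul_U (m n : ℕ) :
    (U (m + n) : ℚ⟦X⟧) * (U n : ℚ⟦X⟧) =
      ∑ j ∈ range (n + 1), X ^ (n - j) * (U (m + 2 * j) : ℚ⟦X⟧) := by
  simpa using congrArg Polynomial.coeToPowerSeries.ringHom (U_add_mul_U m n)

theorem pow_add_two_eq_sub_X_mul {a b : ℚ⟦X⟧} (hsum : a + b = 1) (hprod : a * b = X) (n : ℕ) :
    a ^ (n + 2) = a ^ (n + 1) - X * a ^ n := by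
  linear_combination a ^ n * (a * hsum - hprod)

theorem coeff_pow_add_pow_eq_zero {a b : ℚ⟦X⟧} (hsum : a + b = 1) (hprod : a * b = X)
    {n k : ℕ} (h : n < 2 * k) : coeff k (a ^ n + b ^ n) = 0 := by
  obtain ⟨k, rfl⟩ := Nat.exists_eq_succ_of_ne_zero (by omega : k ≠ 0)
  induction n using Nat.twoStepInduction generalizing k with
  | zero => simp [coeff_one]
  | one => simp [hsum, coeff_one]
  | more n ih₀ ih₁ =>
    have hrec : a ^ (n + 2) + b ^ (n + 2) = a ^ (n + 1) + b ^ (n + 1) - X * (a ^ n + b ^ n) := by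
      rw [pow_add_two_eq_sub_X_mul hsum hprod,
        pow_add_two_eq_sub_X_mul ((add_comm b a).trans hsum) ((mul_comm b a).trans hprod)]
      ring
    obtain ⟨j, rfl⟩ := Nat.exists_eq_succ_of_ne_zero (by omega : k ≠ 0)
    rw [hrec, map_sub, coeff_succ_X_mul, ih₀ j (by omega), ih₁ (j + 1) (by omega), sub_zero]

theorem sub_mul_U {a b : ℚ⟦X⟧} (hsum : a + b = 1) (hprod : a * b = X) (n : ℕ) :
    (b - a) * (U n : ℚ⟦X⟧) = b ^ (n + 1) - a ^ (n + 1) := by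
  induction n using Nat.twoStepInduction with
  | zero => simp [U]
  | one =>
    rw [U, Polynomial.coe_one, mul_one]
    linear_combination (a - b) * hsum
  | more n ih₀ ih₁ =>
    rw [coe_U_add_two, pow_add_two_eq_sub_X_mul hsum hprod,
      pow_add_two_eq_sub_X_mul ((add_comm b a).trans hsum) ((mul_comm b a).trans hprod)]
    linear_combination ih₁ - X * ih₀

noncomputable def sqrtOneSubFourX : ℚ⟦X⟧ := 1 - 2 * X * catalanGF

theorem sqrtOneSubFourX_sq : sqrtOneSubFourX ^ 2 = 1 - 4 * X := by
  rw [sqrtOneSubFourX]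
  linear_combination (-4 * X) * catalanGF_eq_one_add_X_mul_sq

theorem sqrtOneSubFourX_eq_sub : sqrtOneSubFourX = (1 - X * catalanGF) - X * catalanGF := by
  rw [sqrtOneSubFourX]; ring

theorem coeff_one_sub_four_X_mul (k : ℕ) (f : ℚ⟦X⟧) :
    coeff (k + 1) ((1 - 4 * X) * f) = coeff (k + 1) f - 4 * coeff k f := by
  rw [sub_mul, one_mul, mul_assoc, map_sub, show (4 : ℚ⟦X⟧) = C 4 from rfl, coeff_C_mul,
    coeff_succ_X_mul]

theorem coeff_one_sub_four_X_mul_X_mul_catalanGF_pow (m : ℕ) :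
    coeff (m + 2) ((1 - 4 * X) * (X * catalanGF) ^ (2 * m + 1)) =
      if m = 0 then -3 else if m = 1 then 1 else 0 := by
  rw [coeff_one_sub_four_X_mul, mul_pow, coeff_X_pow_mul', coeff_X_pow_mul']
  rcases m with _ | _ | m
  · norm_num [catalanGF]
  · simp [catalanGF]
  · simp only [if_neg (show ¬ 2 * (m + 2) + 1 ≤ m + 2 + 1 + 1 by omega),
      if_neg (show ¬ 2 * (m + 2) + 1 ≤ m + 2 + 1 by omega)]
    simp

def magicWeight (m : ℕ) : ℚ := if m = 0 then 6 else if m = 1 then -2 else 0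

theorem coeff_sqrtOneSubFourX_pow_three_mul_U_two_mul (m : ℕ) :
    coeff (m + 2) (sqrtOneSubFourX ^ 3 * (U (2 * m) : ℚ⟦X⟧)) = magicWeight m := by
  have hsplit : sqrtOneSubFourX ^ 3 * (U (2 * m) : ℚ⟦X⟧) =
      (1 - 4 * X) * ((X * catalanGF) ^ (2 * m + 1) + (1 - X * catalanGF) ^ (2 * m + 1)) -
        C 2 * ((1 - 4 * X) * (X * catalanGF) ^ (2 * m + 1)) := by
    rw [pow_succ, mul_assoc, sqrtOneSubFourX_sq, sqrtOneSubFourX_eq_sub,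
      sub_mul_U (add_sub_cancel _ _) X_mul_catalanGF_mul_one_sub, map_ofNat]
    ring
  have hpow (k : ℕ) (hk : 2 * m + 1 < 2 * k) :=
    coeff_pow_add_pow_eq_zero (add_sub_cancel _ _) X_mul_catalanGF_mul_one_sub hk
  rw [hsplit, map_sub, coeff_one_sub_four_X_mul, hpow _ (by omega), hpow _ (by omega), coeff_C_mul,
    coeff_one_sub_four_X_mul_X_mul_catalanGF_pow, magicWeight]
  split_ifs <;> norm_num

theorem sum_range_magicWeight_add (s N : ℕ) :
    ∑ j ∈ range (N + 1), magicWeight (s + j) =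
      if s = 0 then (if N = 0 then 6 else 4) else if s = 1 then -2 else 0 := by
  induction N with
  | zero => simp [magicWeight]
  | succ N ih =>
    rw [sum_range_succ, ih, magicWeight]
    split_ifs <;> first | contradiction | omega | norm_num

def magicPairing (a b : ℕ) : ℚ :=
  if a = b then (if a = 0 then 6 else 4) else if a = b + 2 ∨ b = a + 2 then -2 else 0

theorem magicPairing_comm (a b : ℕ) : magicPairing a b = magicPairing b a := by
  unfold magicPairing
  split_ifs <;> first | rfl | omega

theorem coeff_X_pow_mul_sqrtOneSubFourX_pow_three_mul_U_mul_U_of_le {a b i d : ℕ} (hba : b ≤ a)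
    (hd : a + b + 2 * i + 4 = 2 * d) :
    coeff d (X ^ i * (sqrtOneSubFourX ^ 3 * ((U a : ℚ⟦X⟧) * (U b : ℚ⟦X⟧)))) =
      magicPairing a b := by
  obtain ⟨s, rfl⟩ : ∃ s, a = 2 * s + b := ⟨(a - b) / 2, by omega⟩
  have hterm : ∀ j ∈ range (b + 1),
      coeff d (X ^ i * (sqrtOneSubFourX ^ 3 * (X ^ (b - j) * (U (2 * s + 2 * j) : ℚ⟦X⟧)))) =
        magicWeight (s + j) := by
    intro j hj
    have hj := mem_range_succ_iff.mp hj
    rw [show X ^ i * (sqrtOneSubFourX ^ 3 * (X ^ (b - j) * (U (2 * s + 2 * j) : ℚ⟦X⟧))) =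
        X ^ (i + (b - j)) * (sqrtOneSubFourX ^ 3 * (U (2 * (s + j)) : ℚ⟦X⟧)) by
          rw [mul_add, pow_add]; ring,
      coeff_X_pow_mul', if_pos (by omega), show d - (i + (b - j)) = s + j + 2 by omega,
      coeff_sqrtOneSubFourX_pow_three_mul_U_two_mul]
  rw [coe_U_add_mul_U, mul_sum, mul_sum, map_sum, sum_congr rfl hterm, sum_range_magicWeight_add,
    magicPairing]
  split_ifs <;> first | rfl | omega

theorem coeff_X_pow_mul_sqrtOneSubFourX_pow_three_mul_U_mul_U {a b i d : ℕ}
    (hd : a + b + 2 * i + 4 = 2 * d) :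
    coeff d (X ^ i * (sqrtOneSubFourX ^ 3 * ((U a : ℚ⟦X⟧) * (U b : ℚ⟦X⟧)))) =
      magicPairing a b := by
  rcases le_total b a with hba | hab
  · exact coeff_X_pow_mul_sqrtOneSubFourX_pow_three_mul_U_mul_U_of_le hba hd
  · rw [mul_comm (U a : ℚ⟦X⟧), magicPairing_comm]
    exact coeff_X_pow_mul_sqrtOneSubFourX_pow_three_mul_U_mul_U_of_le hab (by omega)

def progressionIndicator (A M x : ℕ) : ℚ :=
  if A ≤ x ∧ x ≤ A + 2 * M ∧ 2 ∣ x - A then 1 else 0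

theorem sum_range_ite_add_two_mul_eq (A M x : ℕ) :
    ∑ j ∈ range (M + 1), (if A + 2 * j = x then 1 else 0 : ℚ) = progressionIndicator A M x := by
  induction M with
  | zero =>
    simp only [zero_add, sum_range_one, progressionIndicator]
    split_ifs <;> first | rfl | omega
  | succ M ih =>
    rw [sum_range_succ, ih, progressionIndicator, progressionIndicator]
    split_ifs <;> first | omega | norm_num

theorem magicPairing_eq (a b : ℕ) :
    magicPairing a b =
      2 * ((if a = b then 1 else 0) - if a = b + 2 then 1 else 0) +
        2 * ((if b = a then 1 else 0) - if b = a + 2 then 1 else 0) +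
          2 * ((if a = 0 then 1 else 0) * if b = 0 then 1 else 0) := by
  unfold magicPairing
  split_ifs <;> first | omega | norm_num

theorem sum_sum_ite_sub_ite (A M B N : ℕ) :
    ∑ j ∈ range (M + 1), ∑ k ∈ range (N + 1),
        ((if A + 2 * j = B + 2 * k then 1 else 0) - if A + 2 * j = B + 2 * k + 2 then 1 else 0 : ℚ) =
      progressionIndicator A M B - progressionIndicator A M (B + 2 * N + 2) := by
  simp_rw [show ∀ k, B + 2 * k + 2 = B + 2 * (k + 1) from fun k => by ring]
  rw [← sum_range_ite_add_two_mul_eq, ← sum_range_ite_add_two_mul_eq, ← sum_sub_distrib]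
  refine sum_congr rfl fun j _ => ?_
  rw [sum_range_sub' (fun k => if A + 2 * j = B + 2 * k then (1 : ℚ) else 0)]
  simp only [mul_zero, add_zero, mul_add, mul_one]

theorem sum_sum_magicPairing (A M B N : ℕ) :
    ∑ j ∈ range (M + 1), ∑ k ∈ range (N + 1), magicPairing (A + 2 * j) (B + 2 * k) =
      2 * (progressionIndicator A M B - progressionIndicator A M (B + 2 * N + 2)) +
        2 * (progressionIndicator B N A - progressionIndicator B N (A + 2 * M + 2)) +
          2 * (progressionIndicator A M 0 * progressionIndicator B N 0) := by
  simp only [magicPairing_eq, sum_add_distrib, ← mul_sum]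
  rw [sum_sum_ite_sub_ite, sum_comm, sum_sum_ite_sub_ite, ← sum_mul,
    sum_range_ite_add_two_mul_eq, sum_range_ite_add_two_mul_eq]

set_option maxHeartbeats 1000000 in
theorem sum_sum_magicPairing_eq (n1 n2 n3 n4 : ℕ) (h12 : n2 ≤ n1) (h23 : n3 ≤ n2) (h34 : n4 ≤ n3)
    (hpar : 2 ∣ n1 + n2 + n3 + n4) :
    ∑ j ∈ range (n2 + 1), ∑ k ∈ range (n4 + 1), magicPairing (n1 - n2 + 2 * j) (n3 - n4 + 2 * k) =
      if n1 = n2 ∧ n2 = n3 ∧ n3 = n4 then 6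
      else if n1 = n2 ∧ n3 = n4 then 4
      else if n1 + n4 = n2 + n3 ∧ n1 ≠ n2 then 2
      else if n1 = n2 + n3 + n4 + 2 then -2
      else 0 := by
  rw [sum_sum_magicPairing]
  obtain ⟨a, rfl⟩ : ∃ a, n1 = a + n2 := ⟨n1 - n2, by omega⟩
  obtain ⟨b, rfl⟩ : ∃ b, n3 = b + n4 := ⟨n3 - n4, by omega⟩
  have hout : progressionIndicator b n4 (a + 2 * n2 + 2) = 0 := if_neg (by omega)
  simp only [Nat.add_sub_cancel]
  rw [hout]
  simp only [progressionIndicator]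
  split_ifs <;> norm_num <;> omega

/-- Lemma 4.13 in generating-function form: for `d ≥ 2` and
`n_1 ≥ n_2 ≥ n_3 ≥ n_4 ≥ 0` with `n_1+n_2+n_3+n_4 = 2d−4`, the coefficient of `q^d` in
`(1−4q)·(1−2q·F(q))·U_{n_1}·U_{n_2}·U_{n_3}·U_{n_4}`, i.e. the intersection number
`∫_{Gr(2,d+1)} σ_{n_1}σ_{n_2}σ_{n_3}σ_{n_4}(8σ_{11} − 2σ_1²)`, is given by the case values
`6, 4, 2, −2, 0`. -/
theorem integral_against_magic_class (d n1 n2 n3 n4 : ℕ) (hd : 2 ≤ d)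
    (h12 : n2 ≤ n1) (h23 : n3 ≤ n2) (h34 : n4 ≤ n3)
    (hsum : n1 + n2 + n3 + n4 = 2 * d - 4) :
    PowerSeries.coeff d
        ((1 - 4 * PowerSeries.X) * (1 - 2 * PowerSeries.X * catalanGF) *
          ((U n1 : Polynomial ℚ) : PowerSeries ℚ) * ((U n2 : Polynomial ℚ) : PowerSeries ℚ) *
          ((U n3 : Polynomial ℚ) : PowerSeries ℚ) * ((U n4 : Polynomial ℚ) : PowerSeries ℚ)) =
      if n1 = n2 ∧ n2 = n3 ∧ n3 = n4 then (6 : ℚ)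
      else if n1 = n2 ∧ n3 = n4 then 4
      else if n1 + n4 = n2 + n3 ∧ n1 ≠ n2 then 2
      else if n1 = n2 + n3 + n4 + 2 then -2
      else 0 := by
  have hcube : (1 - 4 * X) * (1 - 2 * X * catalanGF) = sqrtOneSubFourX ^ 3 := by
    rw [← sqrtOneSubFourX_sq, sqrtOneSubFourX]; ring
  have hU {m n : ℕ} (h : n ≤ m) := Nat.sub_add_cancel h ▸ coe_U_add_mul_U (m - n) n
  have hterm : ∀ j ∈ range (n2 + 1), ∀ k ∈ range (n4 + 1),
      coeff d (sqrtOneSubFourX ^ 3 * (X ^ (n2 - j) * (U (n1 - n2 + 2 * j) : ℚ⟦X⟧) *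
        (X ^ (n4 - k) * (U (n3 - n4 + 2 * k) : ℚ⟦X⟧)))) =
        magicPairing (n1 - n2 + 2 * j) (n3 - n4 + 2 * k) := by
    intro j hj k hk
    have := mem_range_succ_iff.mp hj
    have := mem_range_succ_iff.mp hk
    rw [← coeff_X_pow_mul_sqrtOneSubFourX_pow_three_mul_U_mul_U (i := n2 - j + (n4 - k)) (d := d)
      (by omega), pow_add]
    ring_nf
  rw [hcube, mul_assoc, mul_assoc, mul_assoc, ← mul_assoc (U n1 : ℚ⟦X⟧), hU h12, hU h34, sum_mul_sum]
  simp only [mul_sum, map_sum]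
  rw [sum_congr rfl fun j hj => sum_congr rfl (hterm j hj)]
  exact sum_sum_magicPairing_eq n1 n2 n3 n4 h12 h23 h34 (by omega)
end
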